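/- arXiv:cs/0305051 — 2 statements merged into one kernel-verified Lean document; each statement's English description precedes it below -/
import Mathlib

section
/- Let n_1, …, n_d be positive integers, let A and A' be arrangements of the n_1 × ⋯ × n_d matrix, and fix a coordinate t ∈ {1,…,d}. Suppose that for every line L in direction t (a set of cells agreeing in all coordinates except the t-th), the set of values that A' assigns to the cells of L equals the set of values that A assigns to the cells of L, and that the values of A' strictly increase along every line in direction t. Then spread(A') ≤ spread(A); that is, sorting the values within each line of one fixed coordinate to be increasing does not increase the spread in any coordinate. -/
/-!
Along a line in direction `t` the arrangement `A'` lists the values of `A` in increasing order.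
For two lines in direction `t` that differ in a single coordinate `s ≠ t`, the value of `A` at
each cell of one is within `spread A` of its value at the corresponding cell of the other, and
this survives sorting: if `f j ≤ g j + S` for all `j` but the `i`-th smallest value of `f`
exceeded the `i`-th smallest value of `g` by more than `S`, then the `i + 1` indices at which `g`
is at most its `i`-th smallest value would all carry values of `f` below the `i`-th smallest one,
of which there are only `i`. Two cells on a common line in direction `t` carry two values that
`A` takes on that same line, so their difference is at most `spread A` as well.
-/

/-- Two cells of the `n 0 × ⋯ × n (d-1)` matrix lie in a common line:
they agree in all coordinates except (possibly) one. -/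
def sameLine {d : ℕ} {n : Fin d → ℕ} (c c' : (i : Fin d) → Fin (n i)) : Prop :=
  ∃ t : Fin d, ∀ s : Fin d, s ≠ t → c s = c' s

instance {d : ℕ} {n : Fin d → ℕ} (c c' : (i : Fin d) → Fin (n i)) :
    Decidable (sameLine c c') := by
  unfold sameLine; infer_instance

/-- The spread of an arrangement (= bijection from cells to `{0,…,∏ nᵢ − 1}`,
a zero-based version of `{1,…,∏ nᵢ}`): the maximum difference of values over
all pairs of cells lying in a common line. -/
def spread {d : ℕ} {n : Fin d → ℕ}
    (A : ((i : Fin d) → Fin (n i)) ≃ Fin (∏ i, n i)) : ℕ :=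
  Finset.sup Finset.univ
    (fun p : ((i : Fin d) → Fin (n i)) × ((i : Fin d) → Fin (n i)) =>
      if sameLine p.1 p.2 then Nat.dist (A p.1) (A p.2) else 0)

open Finset Function

lemma Nat.dist_le_iff {a b S : ℕ} : Nat.dist a b ≤ S ↔ a ≤ b + S ∧ b ≤ a + S := by
  unfold Nat.dist
  omega

lemma Function.range_update {ι : Type*} [DecidableEq ι] {β : ι → Type*} (c : ∀ i, β i) (t : ι) :
    Set.range (update c t) = {c' | ∀ s, s ≠ t → c' s = c s} := by
  ext c'
  simp [eq_comm (b := c'), eq_update_iff]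

lemma card_filter_comp_eq_of_range_eq {ι κ γ : Type*} [Fintype ι] [Fintype κ] {f : ι → γ}
    {g : κ → γ} (hf : Injective f) (hg : Injective g) (h : Set.range f = Set.range g)
    (p : γ → Prop) [DecidablePred p] :
    #{i | p (f i)} = #{j | p (g j)} := by
  classical
  have himage : univ.image f = univ.image g :=
    coe_injective <| by simpa only [coe_image, coe_univ, Set.image_univ] using h
  rw [← card_image_of_injective _ hf, ← card_image_of_injective _ hg, ← filter_image,
    ← filter_image, himage]

lemma le_of_sorted_rearrangement {ι α β : Type*} [Fintype ι] [LinearOrder ι] [LinearOrder α]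
    [Preorder β] {f f' : ι → α} {g g' : ι → β} {φ : β → α} (hφ : Monotone φ)
    (hf : Injective f) (hg : Injective g) (hf' : StrictMono f') (hg' : StrictMono g')
    (hff' : Set.range f' = Set.range f) (hgg' : Set.range g' = Set.range g)
    (hfg : ∀ j, f j ≤ φ (g j)) (i : ι) : f' i ≤ φ (g' i) := by
  classical
  by_contra! hlt
  have hsub : univ.filter (g · ≤ g' i) ⊆ univ.filter (f · < f' i) :=
    monotone_filter_right _ fun j _ hj => (hfg j).trans_lt ((hφ hj).trans_lt hlt)
  have hcard_le : #{j | g j ≤ g' i} = #{j | j ≤ i} := by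
    rw [card_filter_comp_eq_of_range_eq hg hg'.injective hgg'.symm (· ≤ g' i)]
    simp only [hg'.le_iff_le]
  have hcard_lt : #{j | f j < f' i} = #{j | j < i} := by
    rw [card_filter_comp_eq_of_range_eq hf hf'.injective hff'.symm (· < f' i)]
    simp only [hf'.lt_iff_lt]
  have hssub : univ.filter (· < i) ⊂ univ.filter (· ≤ i) :=
    (ssubset_iff_of_subset (monotone_filter_right _ fun _ _ => le_of_lt)).mpr ⟨i, by simp⟩
  exact (card_le_card hsub).not_gt (hcard_le ▸ hcard_lt ▸ card_lt_card hssub)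

section Arrangement

variable {d : ℕ} {n : Fin d → ℕ} {t : Fin d} {A A' : ((i : Fin d) → Fin (n i)) ≃ Fin (∏ i, n i)}

lemma spread_le_iff {S : ℕ} :
    spread A ≤ S ↔ ∀ c c', sameLine c c' → Nat.dist (A c) (A c') ≤ S := by
  simp only [spread, Finset.sup_le_iff, mem_univ, true_implies, Prod.forall]
  refine forall₂_congr fun c c' => ?_
  split_ifs with h <;> simp [h]

lemma dist_le_spread {c c' : (i : Fin d) → Fin (n i)} (h : sameLine c c') :
    Nat.dist (A c) (A c') ≤ spread A :=
  spread_le_iff.mp le_rfl c c' h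

lemma dist_le_spread_of_image_line_eq {c c' : (i : Fin d) → Fin (n i)}
    (hsame : A' '' {x | ∀ s : Fin d, s ≠ t → x s = c s} = A '' {x | ∀ s : Fin d, s ≠ t → x s = c s})
    (h : ∀ s, s ≠ t → c' s = c s) :
    Nat.dist (A' c) (A' c') ≤ spread A := by
  obtain ⟨x, hx, hxc⟩ := (Set.ext_iff.mp hsame (A' c)).mp ⟨c, fun _ _ => rfl, rfl⟩
  obtain ⟨y, hy, hyc'⟩ := (Set.ext_iff.mp hsame (A' c')).mp ⟨c', h, rfl⟩
  rw [← hxc, ← hyc']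
  exact dist_le_spread ⟨t, fun s hs => (hx s hs).trans (hy s hs).symm⟩

lemma le_add_spread_of_parallel {s : Fin d} (hst : s ≠ t)
    (hsame : ∀ c : (i : Fin d) → Fin (n i),
      A' '' {c' | ∀ s : Fin d, s ≠ t → c' s = c s} = A '' {c' | ∀ s : Fin d, s ≠ t → c' s = c s})
    (hmono : ∀ c c' : (i : Fin d) → Fin (n i),
      (∀ s : Fin d, s ≠ t → c s = c' s) → c t < c' t → A' c < A' c')
    {c c' : (i : Fin d) → Fin (n i)} (h : ∀ r, r ≠ s → c r = c' r) :
    (A' c : ℕ) ≤ A' c' + spread A := by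
  have hinj (c : (i : Fin d) → Fin (n i)) : Injective fun k => (A (update c t k) : ℕ) :=
    Fin.val_injective.comp <| A.injective.comp <| update_injective c t
  have hsorted (c : (i : Fin d) → Fin (n i)) : StrictMono fun k => (A' (update c t k) : ℕ) :=
    fun k k' hk => hmono _ _ (fun r hr => by simp [update_of_ne hr]) (by simpa using hk)
  have hrange (c : (i : Fin d) → Fin (n i)) :
      Set.range (fun k => (A' (update c t k) : ℕ)) = Set.range fun k => (A (update c t k) : ℕ) := by
    change Set.range (Fin.val ∘ A' ∘ update c t) = Set.range (Fin.val ∘ A ∘ update c t)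
    simp only [Set.range_comp, range_update, hsame c]
  have hparallel (k : Fin (n t)) : (A (update c t k) : ℕ) ≤ A (update c' t k) + spread A := by
    have hline : sameLine (update c t k) (update c' t k) := ⟨s, fun r hr => by
      rcases eq_or_ne r t with rfl | hrt
      · simp
      · simp [update_of_ne hrt, h r hr]⟩
    exact (Nat.dist_le_iff.mp (dist_le_spread hline)).1
  have := le_of_sorted_rearrangement (φ := (· + spread A)) (monotone_id.add_const _)
    (hinj c) (hinj c') (hsorted c) (hsorted c') (hrange c) (hrange c') hparallel (c t)
  rwa [update_eq_self, h t hst.symm, update_eq_self] at this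

end Arrangement

theorem spread_sorted_le_general (d : ℕ) (n : Fin d → ℕ) (t : Fin d)
    (A A' : ((i : Fin d) → Fin (n i)) ≃ Fin (∏ i, n i))
    (hsame : ∀ c : (i : Fin d) → Fin (n i),
      (fun x => A' x) '' {c' | ∀ s : Fin d, s ≠ t → c' s = c s} =
      (fun x => A x) '' {c' | ∀ s : Fin d, s ≠ t → c' s = c s})
    (hmono : ∀ c c' : (i : Fin d) → Fin (n i),
      (∀ s : Fin d, s ≠ t → c s = c' s) → c t < c' t → A' c < A' c') :
    spread A' ≤ spread A := by
  rw [spread_le_iff]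
  rintro c c' ⟨s, hs⟩
  obtain rfl | hst := eq_or_ne s t
  · exact dist_le_spread_of_image_line_eq (hsame c) fun r hr => (hs r hr).symm
  · exact Nat.dist_le_iff.mpr
      ⟨le_add_spread_of_parallel hst hsame hmono hs,
        le_add_spread_of_parallel hst hsame hmono fun r hr => (hs r hr).symm⟩

/-- Sorting the values within each line of one fixed coordinate `t` to be
increasing does not increase the spread: if `A'` assigns to every line in
direction `t` the same set of values as `A`, and `A'` is strictly increasing
along every line in direction `t`, then `spread A' ≤ spread A`. -/
theorem spread_sorted_le (d : ℕ) (n : Fin d → ℕ) (hn : ∀ i, 0 < n i) (t : Fin d)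
    (A A' : ((i : Fin d) → Fin (n i)) ≃ Fin (∏ i, n i))
    (hsame : ∀ c : (i : Fin d) → Fin (n i),
      (fun x => A' x) '' {c' | ∀ s : Fin d, s ≠ t → c' s = c s} =
      (fun x => A x) '' {c' | ∀ s : Fin d, s ≠ t → c' s = c s})
    (hmono : ∀ c c' : (i : Fin d) → Fin (n i),
      (∀ s : Fin d, s ≠ t → c s = c' s) → c t < c' t → A' c < A' c') :
    spread A' ≤ spread A :=
  spread_sorted_le_general d n t A A' hsame hmono
end

section
/- Let n_1, n_2 be positive integers with n_1 ≤ n_2 and n_1 even. Then every arrangement A of an n_1 × n_2 matrix has spread(A) ≥ n_1(n_2+1)/2 − 1. -/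
/-- The spread of an arrangement of an `n₁ × n₂` matrix (a bijection from cells
to `{0,…,n₁n₂ − 1}`, a zero-based version of `{1,…,n₁n₂}`): the maximum
difference of values over all pairs of cells in a common row or column. -/
def spread2 {n₁ n₂ : ℕ} (A : Fin n₁ × Fin n₂ ≃ Fin (n₁ * n₂)) : ℕ :=
  Finset.sup Finset.univ
    (fun p : (Fin n₁ × Fin n₂) × (Fin n₁ × Fin n₂) =>
      if p.1.1 = p.2.1 ∨ p.1.2 = p.2.2 then Nat.dist (A p.1) (A p.2) else 0)

/-! Let `S t` be the set of the `t` cells with the smallest values; it touches `r t` rows and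
`c t` columns, so `t ≤ r t * c t`. Every cell in a row or column touched by `S t` is within the
spread of a value below `t`, so the `r t * n₂ + n₁ * c t - r t * c t` cells of these rows and
columns all carry values below `t + spread`. Write `n₁ = 2p` and let `t + 1` be the first time
`p + 1` rows are touched. If at most `n₂ - p` columns are touched at time `t`, the count at
time `t + 1` gives the bound; otherwise `n₂ - p + 1` columns are touched for the first time at
some earlier moment, when at most `p` rows are touched, and the count there gives it. -/

open Finset

theorem Nat.exists_eq_and_succ_eq_of_lt {f : ℕ → ℕ} (hf : ∀ t, f (t + 1) ≤ f t + 1)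
    {k N : ℕ} (h0 : f 0 ≤ k) (hN : k < f N) : ∃ t < N, f t = k ∧ f (t + 1) = k + 1 := by
  induction N with
  | zero => omega
  | succ N ih =>
    by_cases hk : k < f N
    · obtain ⟨t, ht, h⟩ := ih hk
      exact ⟨t, by omega, h⟩
    · exact ⟨N, by omega, by have := hf N; omega, by have := hf N; omega⟩

theorem Finset.card_product_univ_union_univ_product_add {α β : Type*} [Fintype α] [Fintype β]
    [DecidableEq α] [DecidableEq β] (s : Finset α) (t : Finset β) :
    #(s ×ˢ univ ∪ univ ×ˢ t) + #s * #t = #s * Fintype.card β + Fintype.card α * #t := by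
  have hinter : s ×ˢ univ ∩ univ ×ˢ t = s ×ˢ t := by
    rw [product_inter_product, inter_univ, univ_inter]
  rw [← card_product, ← hinter, card_union_add_card_inter, card_product, card_product,
    card_univ, card_univ]

section Arrangement

variable {n₁ n₂ : ℕ} (A : Fin n₁ × Fin n₂ ≃ Fin (n₁ * n₂))

def cellsBelow (t : ℕ) : Finset (Fin n₁ × Fin n₂) := {x | (A x : ℕ) < t}

def rowsBelow (t : ℕ) : Finset (Fin n₁) := (cellsBelow A t).image Prod.fst

def colsBelow (t : ℕ) : Finset (Fin n₂) := (cellsBelow A t).image Prod.snd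

variable {A}

@[simp]
theorem mem_cellsBelow {t : ℕ} {x : Fin n₁ × Fin n₂} : x ∈ cellsBelow A t ↔ (A x : ℕ) < t := by
  simp [cellsBelow]

@[simp]
theorem cellsBelow_zero : cellsBelow A 0 = ∅ := by
  ext; simp

variable (A)

theorem card_cellsBelow (t : ℕ) : #(cellsBelow A t) = min (n₁ * n₂) t := by
  rw [← card_map A.toEmbedding, ← Fin.card_filter_val_lt]
  congr 1
  ext v
  simp

theorem cellsBelow_mono : Monotone (cellsBelow A) := fun _ _ h _ hx => by
  simp only [mem_cellsBelow] at hx ⊢; omega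

theorem card_rowsBelow_mono {s t : ℕ} (h : s ≤ t) : #(rowsBelow A s) ≤ #(rowsBelow A t) :=
  card_le_card (image_subset_image (cellsBelow_mono A h))

theorem card_colsBelow_mono {s t : ℕ} (h : s ≤ t) : #(colsBelow A s) ≤ #(colsBelow A t) :=
  card_le_card (image_subset_image (cellsBelow_mono A h))

theorem card_image_cellsBelow_succ_le {γ : Type*} [DecidableEq γ] (f : Fin n₁ × Fin n₂ → γ)
    (t : ℕ) : #((cellsBelow A (t + 1)).image f) ≤ #((cellsBelow A t).image f) + 1 := by
  have hsplit : cellsBelow A (t + 1) = cellsBelow A t ∪ ({x | (A x : ℕ) = t} : Finset _) := by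
    ext x; simp; omega
  have hsingle : #({x | (A x : ℕ) = t} : Finset _) ≤ 1 :=
    card_le_one.mpr fun x hx y hy => A.injective (Fin.ext (by simp_all))
  rw [hsplit, image_union]
  exact (card_union_le _ _).trans (Nat.add_le_add_left (card_image_le.trans hsingle) _)

theorem card_rowsBelow_succ_le (t : ℕ) : #(rowsBelow A (t + 1)) ≤ #(rowsBelow A t) + 1 :=
  card_image_cellsBelow_succ_le A Prod.fst t

theorem card_colsBelow_succ_le (t : ℕ) : #(colsBelow A (t + 1)) ≤ #(colsBelow A t) + 1 :=
  card_image_cellsBelow_succ_le A Prod.snd t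

theorem card_rowsBelow_top (h : 0 < n₂) : #(rowsBelow A (n₁ * n₂)) = n₁ := by
  have hcells : cellsBelow A (n₁ * n₂) = univ := eq_univ_of_forall fun x => by simp
  have : Nonempty (Fin n₂) := ⟨⟨0, h⟩⟩
  rw [rowsBelow, hcells, ← univ_product_univ, product_image_fst univ_nonempty, card_univ,
    Fintype.card_fin]

theorem le_card_rowsBelow_mul_card_colsBelow {t : ℕ} (ht : t ≤ n₁ * n₂) :
    t ≤ #(rowsBelow A t) * #(colsBelow A t) := by
  calc t = #(cellsBelow A t) := by rw [card_cellsBelow]; omega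
    _ ≤ #(rowsBelow A t ×ˢ colsBelow A t) := card_le_card subset_product
    _ = _ := card_product _ _

theorem dist_le_spread2 {x y : Fin n₁ × Fin n₂} (h : x.1 = y.1 ∨ x.2 = y.2) :
    Nat.dist (A x) (A y) ≤ spread2 A :=
  (if_pos h).symm.trans_le (le_sup (f := fun p : (Fin n₁ × Fin n₂) × (Fin n₁ × Fin n₂) =>
      if p.1.1 = p.2.1 ∨ p.1.2 = p.2.2 then Nat.dist (A p.1) (A p.2) else 0) (mem_univ (x, y)))

theorem card_rowsBelow_product_union_le (t : ℕ) :
    #(rowsBelow A t ×ˢ univ ∪ univ ×ˢ colsBelow A t) ≤ t + spread2 A := by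
  have hcovered : ∀ x ∈ rowsBelow A t ×ˢ univ ∪ univ ×ˢ colsBelow A t,
      (A x : ℕ) ∈ range (t + spread2 A) := by
    intro x hx
    obtain ⟨y, hy, hxy⟩ : ∃ y ∈ cellsBelow A t, x.1 = y.1 ∨ x.2 = y.2 := by
      simp only [rowsBelow, colsBelow, mem_union, mem_product, mem_image] at hx
      grind
    have := dist_le_spread2 A hxy
    simp only [mem_cellsBelow] at hy
    simp only [mem_range, Nat.dist] at this ⊢
    omega
  simpa using card_le_card_of_injOn _ hcovered (fun x _ y _ h => A.injective (Fin.ext h))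

theorem card_rowsBelow_mul_add_le (t : ℕ) :
    #(rowsBelow A t) * n₂ + n₁ * #(colsBelow A t)
      ≤ t + spread2 A + #(rowsBelow A t) * #(colsBelow A t) := by
  have := card_product_univ_union_univ_product_add (rowsBelow A t) (colsBelow A t)
  have := card_rowsBelow_product_union_le A t
  simp only [Fintype.card_fin] at *
  omega

theorem card_rowsBelow_succ_mul_add_le {t : ℕ} (ht : t < n₁ * n₂) :
    #(rowsBelow A (t + 1)) * n₂ + n₁ * #(colsBelow A (t + 1))
      ≤ #(rowsBelow A t) * #(colsBelow A t) + 1 + spread2 A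
        + #(rowsBelow A (t + 1)) * #(colsBelow A (t + 1)) := by
  have := card_rowsBelow_mul_add_le A (t + 1)
  have := le_card_rowsBelow_mul_card_colsBelow A ht.le
  omega

end Arrangement

theorem spread2_lower_bound_even_general (n₁ n₂ : ℕ)
    (hle : n₁ ≤ n₂) (heven : Even n₁)
    (A : Fin n₁ × Fin n₂ ≃ Fin (n₁ * n₂)) :
    n₁ * (n₂ + 1) / 2 - 1 ≤ spread2 A := by
  obtain ⟨p, rfl⟩ := heven
  rcases Nat.eq_zero_or_pos p with rfl | hp
  · simp
  suffices p * n₂ + p ≤ spread2 A + 1 by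
    rw [show (p + p) * (n₂ + 1) = 2 * (p * n₂ + p) by ring, Nat.mul_div_cancel_left _ two_pos]
    omega
  obtain ⟨t, ht, hrt, hrt'⟩ := Nat.exists_eq_and_succ_eq_of_lt
    (f := fun t => #(rowsBelow A t)) (card_rowsBelow_succ_le A) (k := p)
    (by simp [rowsBelow]) (by rw [card_rowsBelow_top A (by omega)]; omega)
  have hstep := card_rowsBelow_succ_mul_add_le A ht
  by_cases hc : #(colsBelow A t) + p ≤ n₂
  · have := card_colsBelow_mono A t.le_succ
    rw [hrt, hrt'] at hstep
    -- the slack is `(p - 1) * (c (t + 1) - c t) + (n₂ - p - c t)`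
    nlinarith
  · obtain ⟨u, hu, hcu, hcu'⟩ := Nat.exists_eq_and_succ_eq_of_lt
      (f := fun t => #(colsBelow A t)) (card_colsBelow_succ_le A) (k := n₂ - p) (N := t)
      (by simp [colsBelow]) (by omega)
    have hr : #(rowsBelow A (u + 1)) ≤ p := (card_rowsBelow_mono A hu).trans hrt.le
    have := card_rowsBelow_mono A u.le_succ
    have hstep' := card_rowsBelow_succ_mul_add_le A (hu.trans ht)
    rw [hcu, hcu'] at hstep'
    obtain ⟨q, rfl⟩ : ∃ q, n₂ = q + p := ⟨n₂ - p, by omega⟩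
    simp only [Nat.add_sub_cancel] at hstep'
    -- the slack is `(p - r (u + 1)) * (q + 1 - p) + (r (u + 1) - r u) * q`
    nlinarith

/-- If `n₁ ≤ n₂` and `n₁` is even, every arrangement of an `n₁ × n₂` matrix
has spread at least `n₁(n₂+1)/2 − 1`. -/
theorem spread2_lower_bound_even (n₁ n₂ : ℕ) (h₁ : 1 ≤ n₁) (h₂ : 1 ≤ n₂)
    (hle : n₁ ≤ n₂) (heven : Even n₁)
    (A : Fin n₁ × Fin n₂ ≃ Fin (n₁ * n₂)) :
    n₁ * (n₂ + 1) / 2 - 1 ≤ spread2 A :=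
  spread2_lower_bound_even_general n₁ n₂ hle heven A
end
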